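/- arXiv:2205.11862 — 3 statements merged into one kernel-verified Lean document; each statement's English description precedes it below -/
import Mathlib

section
/- For each i ∈ {0,1,2,3}, the function τ ↦ (1+τ)^(3/2+i) K^(i)(τ) is bounded on [0,∞), where K(τ) = (√π/τ) e^(−τ/2) I₁(τ/2) extended smoothly to τ = 0 and K^(i) denotes the i-th derivative. -/
/-- The modified Bessel function of the first kind of order 1. -/
noncomputable def I1 (τ : ℝ) : ℝ :=
  (1 / Real.pi) * ∫ φ in (0:ℝ)..Real.pi, Real.exp (τ * Real.cos φ) * Real.cos φ

open Real MeasureTheory intervalIntegral Set in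
noncomputable def J (i : ℕ) (τ : ℝ) : ℝ :=
  ∫ φ in (0:ℝ)..Real.pi, ((Real.cos φ - 1)/2)^i * Real.exp (τ * ((Real.cos φ - 1)/2)) * Real.sin φ ^ 2

lemma J_cont (i : ℕ) (τ : ℝ) :
    Continuous (fun φ : ℝ => ((Real.cos φ - 1)/2)^i * Real.exp (τ * ((Real.cos φ - 1)/2)) * Real.sin φ ^ 2) := by
  fun_prop

lemma hasDerivAt_J (i : ℕ) (τ₀ : ℝ) : HasDerivAt (J i) (J (i+1) τ₀) τ₀ := by
  have key := intervalIntegral.hasDerivAt_integral_of_dominated_loc_of_deriv_le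
    (F := fun τ φ => ((Real.cos φ - 1)/2)^i * Real.exp (τ * ((Real.cos φ - 1)/2)) * Real.sin φ ^ 2)
    (F' := fun τ φ => ((Real.cos φ - 1)/2)^(i+1) * Real.exp (τ * ((Real.cos φ - 1)/2)) * Real.sin φ ^ 2)
    (x₀ := τ₀) (a := 0) (b := Real.pi) (μ := MeasureTheory.volume)
    (bound := fun _ => Real.exp (|τ₀| + 1))
    (s := Metric.ball τ₀ 1) (Metric.ball_mem_nhds τ₀ one_pos)
    (Filter.Eventually.of_forall fun τ => ((J_cont i τ)).aestronglyMeasurable)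
    ((J_cont i τ₀).intervalIntegrable _ _)
    ((J_cont (i+1) τ₀).aestronglyMeasurable)
    ?_ (by apply Continuous.intervalIntegrable; fun_prop) ?_
  · exact key.2
  · refine Filter.Eventually.of_forall fun φ _ τ hτ => ?_
    have hc1 := Real.neg_one_le_cos φ
    have hc2 := Real.cos_le_one φ
    have hτ' : |τ| ≤ |τ₀| + 1 := by
      have := abs_sub_abs_le_abs_sub τ τ₀
      rw [Metric.mem_ball, Real.dist_eq] at hτ
      linarith
    have habs : |(Real.cos φ - 1)/2| ≤ 1 := by rw [abs_le]; constructor <;> linarith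
    have h2 : Real.exp (τ * ((Real.cos φ - 1)/2)) ≤ Real.exp (|τ₀| + 1) := by
      apply Real.exp_le_exp.2
      calc τ * ((Real.cos φ - 1)/2) ≤ |τ * ((Real.cos φ - 1)/2)| := le_abs_self _
        _ = |τ| * |(Real.cos φ - 1)/2| := abs_mul _ _
        _ ≤ (|τ₀| + 1) * 1 := by
            apply mul_le_mul hτ' habs (abs_nonneg _) (by positivity)
        _ = |τ₀| + 1 := mul_one _
    have hs : |Real.sin φ ^ 2| ≤ 1 := by
      rw [abs_le]; constructor
      · nlinarith [sq_nonneg (Real.sin φ)]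
      · nlinarith [Real.sin_sq_le_one φ]
    calc ‖((Real.cos φ - 1)/2)^(i+1) * Real.exp (τ * ((Real.cos φ - 1)/2)) * Real.sin φ ^ 2‖
        = |(Real.cos φ - 1)/2|^(i+1) * Real.exp (τ * ((Real.cos φ - 1)/2)) * |Real.sin φ ^ 2| := by
          rw [Real.norm_eq_abs, abs_mul, abs_mul, abs_pow, Real.abs_exp]
      _ ≤ 1 * Real.exp (|τ₀| + 1) * 1 := by
          apply mul_le_mul _ hs (abs_nonneg _) (by positivity)
          apply mul_le_mul (pow_le_one₀ (abs_nonneg _) habs) h2 (Real.exp_nonneg _) (by norm_num)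
      _ = Real.exp (|τ₀| + 1) := by ring
  · refine Filter.Eventually.of_forall fun φ _ τ hτ => ?_
    have h1 : HasDerivAt (fun τ : ℝ => Real.exp (τ * ((Real.cos φ - 1)/2)))
        (((Real.cos φ - 1)/2) * Real.exp (τ * ((Real.cos φ - 1)/2))) τ := by
      have := (Real.hasDerivAt_exp (τ * ((Real.cos φ - 1)/2))).comp τ
        ((hasDerivAt_id τ).mul_const ((Real.cos φ - 1)/2))
      simpa [mul_comm, one_mul, Function.comp_def] using this
    have := (h1.const_mul (((Real.cos φ - 1)/2)^i)).mul_const (Real.sin φ ^ 2)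
    refine HasDerivAt.congr_deriv this ?_
    ring

lemma deriv_J (i : ℕ) : deriv (J i) = J (i+1) := funext fun τ => (hasDerivAt_J i τ).deriv

lemma iteratedDeriv_cJ (c : ℝ) (n i : ℕ) :
    iteratedDeriv n (fun τ => c * J i τ) = fun τ => c * J (n+i) τ := by
  induction n generalizing i with
  | zero => simp
  | succ n ih =>
    have hder : deriv (fun τ => c * J i τ) = fun τ => c * J (i+1) τ :=
      funext fun τ => ((hasDerivAt_J i τ).const_mul c).deriv
    have h : n + (i+1) = n + 1 + i := by omega
    rw [iteratedDeriv_succ', hder, ih, h]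

lemma iterWithin (G : ℝ → ℝ) (hd : ∀ n, Differentiable ℝ (iteratedDeriv n G)) (n : ℕ) :
    ∀ {x : ℝ}, x ∈ Set.Ici (0:ℝ) →
    iteratedDerivWithin n G (Set.Ici 0) x = iteratedDeriv n G x := by
  induction n with
  | zero => intro x _; simp
  | succ n ih =>
    intro x hx
    rw [iteratedDerivWithin_succ, iteratedDeriv_succ,
      derivWithin_congr (fun y hy => ih hy) (ih hx)]
    exact ((hd n) x).derivWithin (uniqueDiffOn_Ici 0 x hx)

open Real MeasureTheory intervalIntegral Set in
/-- integration by parts -/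
lemma parts (x : ℝ) :
    ∫ φ in (0:ℝ)..Real.pi, Real.exp (x * Real.cos φ) * Real.cos φ =
    x * ∫ φ in (0:ℝ)..Real.pi, Real.exp (x * Real.cos φ) * Real.sin φ ^ 2 := by
  have hd : ∀ φ ∈ Set.uIcc (0:ℝ) Real.pi, HasDerivAt (fun φ => Real.exp (x * Real.cos φ) * Real.sin φ)
      (Real.exp (x * Real.cos φ) * Real.cos φ - x * (Real.exp (x * Real.cos φ) * Real.sin φ ^ 2)) φ := by
    intro φ _
    have h1 : HasDerivAt (fun φ : ℝ => Real.exp (x * Real.cos φ))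
        (Real.exp (x * Real.cos φ) * (x * (-Real.sin φ))) φ := by
      exact (Real.hasDerivAt_exp _).comp φ ((Real.hasDerivAt_cos φ).const_mul x)
    have := h1.mul (Real.hasDerivAt_sin φ)
    refine HasDerivAt.congr_deriv this ?_
    ring
  have hint : IntervalIntegrable (fun φ => Real.exp (x * Real.cos φ) * Real.cos φ -
      x * (Real.exp (x * Real.cos φ) * Real.sin φ ^ 2)) volume 0 Real.pi := by
    apply Continuous.intervalIntegrable; fun_prop
  have := intervalIntegral.integral_eq_sub_of_hasDerivAt hd hint
  simp only [Real.sin_pi, Real.sin_zero, mul_zero, sub_zero] at this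
  have hsplit : ∫ φ in (0:ℝ)..Real.pi, (Real.exp (x * Real.cos φ) * Real.cos φ -
      x * (Real.exp (x * Real.cos φ) * Real.sin φ ^ 2)) =
      (∫ φ in (0:ℝ)..Real.pi, Real.exp (x * Real.cos φ) * Real.cos φ) -
      x * ∫ φ in (0:ℝ)..Real.pi, Real.exp (x * Real.cos φ) * Real.sin φ ^ 2 := by
    rw [intervalIntegral.integral_sub (by apply Continuous.intervalIntegrable; fun_prop)
      (by apply Continuous.intervalIntegrable; fun_prop), intervalIntegral.integral_const_mul]
  rw [hsplit] at this
  linarith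

open Real MeasureTheory intervalIntegral Set in
lemma K_eq_J (K : ℝ → ℝ)
    (hKeq : ∀ τ : ℝ, 0 < τ →
      K τ = (Real.sqrt Real.pi / τ) * Real.exp (-τ / 2) * I1 (τ / 2))
    (τ : ℝ) (hτ : 0 < τ) : K τ = (1 / (2 * Real.sqrt Real.pi)) * J 0 τ := by
  rw [hKeq τ hτ, I1, parts (τ/2)]
  have hmerge : Real.exp (-τ/2) * ∫ φ in (0:ℝ)..Real.pi, Real.exp (τ/2 * Real.cos φ) * Real.sin φ ^ 2
      = J 0 τ := by
    rw [← intervalIntegral.integral_const_mul, J]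
    apply intervalIntegral.integral_congr
    intro φ _
    simp only [pow_zero, one_mul]
    rw [show τ * ((Real.cos φ - 1)/2) = (-τ/2) + (τ/2 * Real.cos φ) by ring, Real.exp_add]
    ring
  have hπ : (0:ℝ) < Real.pi := Real.pi_pos
  have hsq : Real.sqrt Real.pi * Real.sqrt Real.pi = Real.pi := Real.mul_self_sqrt hπ.le
  have h2 : Real.sqrt Real.pi > 0 := Real.sqrt_pos.2 hπ
  rw [← hmerge]
  generalize (∫ φ in (0:ℝ)..Real.pi, Real.exp (τ/2 * Real.cos φ) * Real.sin φ ^ 2) = A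
  field_simp
  ring_nf
  rw [Real.sq_sqrt hπ.le]
  ring

open Real MeasureTheory intervalIntegral Set in
lemma J_bounded (i : ℕ) (τ : ℝ) (hτ : 0 ≤ τ) : |J i τ| ≤ Real.pi := by
  have h := intervalIntegral.norm_integral_le_of_norm_le_const
    (C := 1) (f := fun φ => ((Real.cos φ - 1)/2)^i * Real.exp (τ * ((Real.cos φ - 1)/2)) * Real.sin φ ^ 2)
    (a := 0) (b := Real.pi) ?_
  · rw [Real.norm_eq_abs] at h
    calc |J i τ| ≤ 1 * |Real.pi - 0| := h
      _ = Real.pi := by rw [sub_zero, abs_of_nonneg Real.pi_pos.le, one_mul]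
  · intro φ _
    have h1 := Real.neg_one_le_cos φ
    have h2 := Real.cos_le_one φ
    have habs : |(Real.cos φ - 1)/2| ≤ 1 := by rw [abs_le]; constructor <;> linarith
    have hexp : Real.exp (τ * ((Real.cos φ - 1)/2)) ≤ 1 := by
      rw [Real.exp_le_one_iff]
      apply mul_nonpos_of_nonneg_of_nonpos hτ
      linarith
    have hs : |Real.sin φ ^ 2| ≤ 1 := by
      rw [abs_le]; constructor
      · nlinarith [sq_nonneg (Real.sin φ)]
      · nlinarith [Real.sin_sq_le_one φ]
    rw [Real.norm_eq_abs, abs_mul, abs_mul, abs_pow, Real.abs_exp]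
    calc |(Real.cos φ - 1)/2|^i * Real.exp (τ * ((Real.cos φ - 1)/2)) * |Real.sin φ ^ 2|
        ≤ 1 * 1 * 1 := by
          apply mul_le_mul _ hs (abs_nonneg _) (by norm_num)
          apply mul_le_mul (pow_le_one₀ (abs_nonneg _) habs) hexp (Real.exp_nonneg _) (by norm_num)
      _ = 1 := by norm_num

lemma one_sub_cos_bounds (φ : ℝ) (h0 : 0 ≤ φ) (hπ : φ ≤ Real.pi) :
    2 * φ^2 ≤ (1 - Real.cos φ) * Real.pi^2 ∧ 1 - Real.cos φ ≤ φ^2 / 2 := by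
  have key : Real.sin (φ/2) ^ 2 = 1/2 - Real.cos φ / 2 := by
    have := Real.sin_sq_eq_half_sub (φ/2)
    rw [mul_div_cancel₀ _ (two_ne_zero)] at this
    exact this
  have hπpos := Real.pi_pos
  have hs_le : Real.sin (φ/2) ≤ φ/2 := Real.sin_le (by linarith)
  have hs_ge : 2 / Real.pi * (φ/2) ≤ Real.sin (φ/2) := Real.mul_le_sin (by linarith) (by linarith)
  have hs_nonneg : 0 ≤ Real.sin (φ/2) := Real.sin_nonneg_of_nonneg_of_le_pi (by linarith) (by linarith)
  constructor
  · have hs_ge' : φ / Real.pi ≤ Real.sin (φ/2) := by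
      have h2 : 2 / Real.pi * (φ/2) = φ / Real.pi := by field_simp
      linarith [h2 ▸ hs_ge]
    rw [div_le_iff₀ hπpos] at hs_ge'
    have h4 : φ^2 ≤ (Real.sin (φ/2) * Real.pi)^2 := pow_le_pow_left₀ h0 hs_ge' 2
    have key' : (1 - Real.cos φ) = 2 * Real.sin (φ/2)^2 := by linarith
    rw [key']
    nlinarith [h4]
  · have h1 : Real.sin (φ/2)^2 ≤ (φ/2)^2 := by
      apply sq_le_sq' (by linarith) hs_le
    nlinarith [h1, key]

open Real MeasureTheory intervalIntegral Set in
lemma J_decay (i : ℕ) : ∃ C : ℝ, ∀ τ : ℝ, 0 < τ → |J i τ| ≤ C * τ ^ (-((3:ℝ)/2 + i)) := by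
  refine ⟨(Real.pi^2) ^ ((3:ℝ)/2 + i) * (1/2) * Real.Gamma ((3:ℝ)/2 + i), fun τ hτ => ?_⟩
  have hπ := Real.pi_pos
  set b : ℝ := τ / Real.pi^2 with hb
  have hb0 : 0 < b := by positivity
  have hcont : Continuous (fun φ : ℝ => φ^(2*i+2) * Real.exp (-b * φ^2)) := by fun_prop
  have step1 : |J i τ| ≤ ∫ φ in (0:ℝ)..Real.pi, |((Real.cos φ - 1)/2)^i * Real.exp (τ * ((Real.cos φ - 1)/2)) * Real.sin φ ^ 2| :=
    intervalIntegral.abs_integral_le_integral_abs hπ.le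
  have step2 : ∫ φ in (0:ℝ)..Real.pi, |((Real.cos φ - 1)/2)^i * Real.exp (τ * ((Real.cos φ - 1)/2)) * Real.sin φ ^ 2|
      ≤ ∫ φ in (0:ℝ)..Real.pi, φ^(2*i+2) * Real.exp (-b * φ^2) := by
    apply intervalIntegral.integral_mono_on hπ.le
    · apply Continuous.intervalIntegrable
      have : Continuous (fun φ : ℝ => ((Real.cos φ - 1)/2)^i * Real.exp (τ * ((Real.cos φ - 1)/2)) * Real.sin φ ^ 2) := by fun_prop
      exact this.abs
    · exact hcont.intervalIntegrable _ _
    · intro φ ⟨h0, hφπ⟩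
      obtain ⟨hlow, hhigh⟩ := one_sub_cos_bounds φ h0 hφπ
      have h1 := Real.neg_one_le_cos φ
      have h2 := Real.cos_le_one φ
      rw [abs_mul, abs_mul, abs_pow, Real.abs_exp]
      have e1 : |(Real.cos φ - 1)/2|^i ≤ (φ^2)^i := by
        apply pow_le_pow_left₀ (abs_nonneg _)
        rw [abs_of_nonpos (by linarith)]
        nlinarith
      have e2 : Real.exp (τ * ((Real.cos φ - 1)/2)) ≤ Real.exp (-b * φ^2) := by
        apply Real.exp_le_exp.2
        rw [hb]
        have hπ2 : (0:ℝ) < Real.pi^2 := by positivity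
        rw [show -(τ/Real.pi^2) * φ^2 = (-(τ * φ^2))/Real.pi^2 by ring,
          le_div_iff₀ hπ2]
        nlinarith [mul_le_mul_of_nonneg_left hlow hτ.le]
      have e3 : |Real.sin φ ^ 2| ≤ φ^2 := by
        rw [abs_of_nonneg (sq_nonneg _)]
        nlinarith [Real.sin_le h0, Real.sin_nonneg_of_nonneg_of_le_pi h0 hφπ, Real.sin_sq_le_one φ]
      calc |(Real.cos φ - 1)/2|^i * Real.exp (τ * ((Real.cos φ - 1)/2)) * |Real.sin φ ^ 2|
          ≤ (φ^2)^i * Real.exp (-b * φ^2) * φ^2 := by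
            apply mul_le_mul _ e3 (abs_nonneg _)
              (mul_nonneg (pow_nonneg (sq_nonneg φ) i) (Real.exp_nonneg _))
            exact mul_le_mul e1 e2 (Real.exp_nonneg _) (pow_nonneg (sq_nonneg φ) i)
        _ = φ^(2*i+2) * Real.exp (-b * φ^2) := by rw [← pow_mul]; ring
  have step3 : ∫ φ in (0:ℝ)..Real.pi, φ^(2*i+2) * Real.exp (-b * φ^2)
      ≤ ∫ x in Ioi (0:ℝ), x ^ ((2*i+2:ℕ):ℝ) * Real.exp (-b * x ^ (2:ℝ)) := by
    rw [intervalIntegral.integral_of_le hπ.le]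
    have hInt : IntegrableOn (fun x : ℝ => x ^ ((2*i+2:ℕ):ℝ) * Real.exp (-b * x ^ (2:ℝ))) (Ioi 0) := by
      apply integrableOn_rpow_mul_exp_neg_mul_rpow _ two_pos hb0
      have : (0:ℝ) ≤ ((2*i+2:ℕ):ℝ) := Nat.cast_nonneg _
      linarith
    have heq : ∀ x ∈ Ioc (0:ℝ) Real.pi, x^(2*i+2) * Real.exp (-b * x^2) = x ^ ((2*i+2:ℕ):ℝ) * Real.exp (-b * x ^ (2:ℝ)) := by
      intro x ⟨hx, _⟩
      rw [Real.rpow_natCast, Real.rpow_two]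
    rw [setIntegral_congr_fun measurableSet_Ioc heq]
    apply setIntegral_mono_set hInt
    · filter_upwards [self_mem_ae_restrict measurableSet_Ioi] with x hx
      have hx' : (0:ℝ) < x := hx
      positivity
    · filter_upwards with x using fun hx => hx.1
  have step4 : ∫ x in Ioi (0:ℝ), x ^ ((2*i+2:ℕ):ℝ) * Real.exp (-b * x ^ (2:ℝ))
      = b ^ (-(((2*i+2:ℕ):ℝ) + 1)/2) * (1/2) * Real.Gamma ((((2*i+2:ℕ):ℝ) + 1)/2) := by
    apply integral_rpow_mul_exp_neg_mul_rpow two_pos _ hb0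
    have : (0:ℝ) ≤ ((2*i+2:ℕ):ℝ) := Nat.cast_nonneg _
    linarith
  have harg : (((2*i+2:ℕ):ℝ) + 1)/2 = (3:ℝ)/2 + i := by
    push_cast; ring
  have hbpow : b ^ (-(((2*i+2:ℕ):ℝ) + 1)/2)
      = (Real.pi^2) ^ ((3:ℝ)/2 + i) * τ ^ (-((3:ℝ)/2 + i)) := by
    rw [show (-(((2*i+2:ℕ):ℝ) + 1)/2) = -((3:ℝ)/2 + i) by push_cast; ring]
    rw [hb, Real.div_rpow hτ.le (by positivity), Real.rpow_neg hτ.le, Real.rpow_neg (by positivity)]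
    field_simp
  calc |J i τ| ≤ b ^ (-(((2*i+2:ℕ):ℝ) + 1)/2) * (1/2) * Real.Gamma ((((2*i+2:ℕ):ℝ) + 1)/2) := by
        rw [← step4]; exact step1.trans (step2.trans step3)
    _ = (Real.pi^2) ^ ((3:ℝ)/2 + i) * (1/2) * Real.Gamma ((3:ℝ)/2 + i) * τ ^ (-((3:ℝ)/2 + i)) := by
        rw [hbpow, harg]; ring

theorem K_derivatives_bounded (K : ℝ → ℝ)
    (hKsmooth : ContDiffOn ℝ (⊤ : ℕ∞) K (Set.Ici 0))
    (hKeq : ∀ τ : ℝ, 0 < τ →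
      K τ = (Real.sqrt Real.pi / τ) * Real.exp (-τ / 2) * I1 (τ / 2)) :
    ∀ i : ℕ, i ≤ 3 → ∃ M : ℝ, ∀ τ : ℝ, 0 ≤ τ →
      |(1 + τ) ^ ((3:ℝ)/2 + (i : ℝ)) * iteratedDerivWithin i K (Set.Ici 0) τ| ≤ M := by
  intro i _
  have hπ := Real.pi_pos
  have hsqπ : 0 < Real.sqrt Real.pi := Real.sqrt_pos.2 hπ
  set c : ℝ := 1 / (2 * Real.sqrt Real.pi) with hc
  have hcpos : 0 < c := by positivity
  set G : ℝ → ℝ := fun τ => c * J 0 τ with hGdef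
  have hGdiff : ∀ n, Differentiable ℝ (iteratedDeriv n G) := by
    intro n
    rw [hGdef, iteratedDeriv_cJ]
    exact fun τ => ((hasDerivAt_J (n+0) τ).const_mul c).differentiableAt
  have hEq : Set.EqOn K G (Set.Ici 0) := by
    intro x hx
    rcases eq_or_lt_of_le (Set.mem_Ici.1 hx) with h | h
    · -- x = 0 : continuity argument
      subst h
      have hT1 : Filter.Tendsto K (nhdsWithin 0 (Set.Ioi 0)) (nhds (K 0)) := by
        have := (hKsmooth.continuousOn).continuousWithinAt (Set.self_mem_Ici (a := (0:ℝ)))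
        exact this.mono_left (nhdsWithin_mono 0 Set.Ioi_subset_Ici_self)
      have hT2 : Filter.Tendsto K (nhdsWithin 0 (Set.Ioi 0)) (nhds (G 0)) := by
        have hGt : Filter.Tendsto G (nhdsWithin 0 (Set.Ioi 0)) (nhds (G 0)) :=
          (((hasDerivAt_J 0 0).const_mul c).differentiableAt.continuousAt).continuousWithinAt
        apply hGt.congr'
        filter_upwards [self_mem_nhdsWithin] with y hy
        exact (K_eq_J K hKeq y hy).symm
      exact tendsto_nhds_unique hT1 hT2
    · exact K_eq_J K hKeq x h
  obtain ⟨C, hC⟩ := J_decay i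
  have hC0 : 0 ≤ C := by
    have := hC 1 one_pos
    rw [Real.one_rpow, mul_one] at this
    exact le_trans (abs_nonneg _) this
  set e : ℝ := (3:ℝ)/2 + i with he
  have he0 : 0 ≤ e := by positivity
  refine ⟨2 ^ e * c * max Real.pi C, fun τ hτ => ?_⟩
  have hiter : iteratedDerivWithin i K (Set.Ici 0) τ = c * J i τ := by
    rw [iteratedDerivWithin_congr hEq hτ,
      iterWithin G hGdiff i hτ, hGdef, iteratedDeriv_cJ]
    simp
  have h1τ : (0:ℝ) ≤ 1 + τ := by linarith
  rw [hiter, abs_mul, abs_of_nonneg (Real.rpow_nonneg h1τ e), abs_mul,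
    abs_of_nonneg hcpos.le]
  rcases le_total τ 1 with h | h
  · have b1 : (1+τ) ^ e ≤ 2 ^ e := Real.rpow_le_rpow h1τ (by linarith) he0
    have b2 : |J i τ| ≤ Real.pi := J_bounded i τ hτ
    calc (1+τ) ^ e * (c * |J i τ|) ≤ 2 ^ e * (c * Real.pi) := by
          apply mul_le_mul b1 (mul_le_mul_of_nonneg_left b2 hcpos.le)
            (by positivity) (by positivity)
      _ ≤ 2 ^ e * c * max Real.pi C := by
          rw [mul_assoc]
          apply mul_le_mul_of_nonneg_left _ (by positivity)
          exact mul_le_mul_of_nonneg_left (le_max_left _ _) hcpos.le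
  · have hτ0 : (0:ℝ) < τ := lt_of_lt_of_le one_pos h
    have b1 : (1+τ) ^ e ≤ 2 ^ e * τ ^ e := by
      rw [← Real.mul_rpow (by norm_num) hτ0.le]
      exact Real.rpow_le_rpow h1τ (by linarith) he0
    have b2 : |J i τ| ≤ C * τ ^ (-e) := hC τ hτ0
    have hτe : τ ^ e * τ ^ (-e) = 1 := by
      rw [← Real.rpow_add hτ0]; simp
    calc (1+τ) ^ e * (c * |J i τ|)
        ≤ (2 ^ e * τ ^ e) * (c * (C * τ ^ (-e))) := by
          apply mul_le_mul b1 (mul_le_mul_of_nonneg_left b2 hcpos.le)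
            (by positivity) (by positivity)
      _ = 2 ^ e * c * C * (τ ^ e * τ ^ (-e)) := by ring
      _ = 2 ^ e * c * C := by rw [hτe, mul_one]
      _ ≤ 2 ^ e * c * max Real.pi C := by
          apply mul_le_mul_of_nonneg_left (le_max_right _ _) (by positivity)
end

section
/- (Grönwall-type lemma with singular kernel) Let 0 < T ≤ +∞ and let f : [0,T) → [0,∞) be locally bounded and measurable. Suppose there exist a ≥ 0, b ≥ 0 and γ > β > 0 with β ≤ 1 such that f(t) ≤ a + b ∫₀^t (t−s)^(β−1) (1+s)^(−γ) f(s) ds for all t ∈ [0,T). Then there exists a constant C depending only on b, β, γ (but not on T or f) such that f(t) ≤ a·C for all t ∈ [0,T). -/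
open MeasureTheory Set intervalIntegral

namespace GronwallAux


lemma meas_rpow_const (r : ℝ) : Measurable (fun x : ℝ => x ^ r) :=
  measurable_of_continuousOn_compl_singleton 0 fun x hx =>
    (Real.continuousAt_rpow_const x r (Or.inl hx)).continuousWithinAt

lemma rpow_subadd {x y p : ℝ} (hx : 0 ≤ x) (hy : 0 ≤ y) (hp : 0 ≤ p) (hp1 : p ≤ 1) :
    (x + y) ^ p ≤ x ^ p + y ^ p := by
  have h := NNReal.rpow_add_le_add_rpow (⟨x, hx⟩ : NNReal) (⟨y, hy⟩ : NNReal) hp hp1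
  rw [← NNReal.coe_le_coe] at h
  push_cast [NNReal.coe_rpow] at h
  exact h

lemma ker_meas (β γ t : ℝ) :
    Measurable (fun s : ℝ => (t - s) ^ (β - 1) * (1 + s) ^ (-γ)) :=
  ((meas_rpow_const (β - 1)).comp (measurable_const.sub measurable_id)).mul
    ((meas_rpow_const (-γ)).comp (measurable_const.add measurable_id))

lemma int_ker {β γ t a' b' : ℝ} (hβ : 0 < β) (hγ : 0 ≤ γ) (h0 : 0 ≤ a') (hab : a' ≤ b')
    (hbt : b' ≤ t) :
    IntervalIntegrable (fun s : ℝ => (t - s) ^ (β - 1) * (1 + s) ^ (-γ)) volume a' b' := by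
  have hg : IntervalIntegrable (fun s : ℝ => (t - s) ^ (β - 1)) volume a' b' := by
    have h := (intervalIntegral.intervalIntegrable_rpow' (a := t - a') (b := t - b')
      (by linarith : (-1:ℝ) < β - 1)).comp_sub_left t
    simpa [sub_sub_cancel] using h
  refine hg.mono_fun ((ker_meas β γ t).aestronglyMeasurable) ?_
  refine (ae_restrict_iff' measurableSet_uIoc).mpr (ae_of_all _ ?_)
  intro s hs
  rw [Set.uIoc_of_le hab] at hs
  have hs0 : 0 ≤ s := le_trans h0 hs.1.le
  have h1 : 0 ≤ t - s := by linarith [hs.2]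
  have h2 : (0:ℝ) ≤ (t - s) ^ (β - 1) := Real.rpow_nonneg h1 _
  have h3 : (1 + s) ^ (-γ) ≤ 1 :=
    Real.rpow_le_one_of_one_le_of_nonpos (by linarith) (by linarith)
  have h4 : (0:ℝ) ≤ (1 + s) ^ (-γ) := Real.rpow_nonneg (by linarith) _
  simp only [Real.norm_eq_abs]
  rw [abs_of_nonneg (mul_nonneg h2 h4), abs_of_nonneg h2]
  exact mul_le_of_le_one_right h2 h3

lemma int_ker_mul {β γ t a' b' M : ℝ} {f : ℝ → ℝ} (hβ : 0 < β) (hγ : 0 ≤ γ) (h0 : 0 ≤ a')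
    (hab : a' ≤ b') (hbt : b' ≤ t) (hf : Measurable f)
    (hM : ∀ s ∈ Set.Icc a' b', |f s| ≤ M) :
    IntervalIntegrable (fun s : ℝ => (t - s) ^ (β - 1) * (1 + s) ^ (-γ) * f s) volume a' b' := by
  have hM0 : 0 ≤ M := le_trans (abs_nonneg _) (hM a' ⟨le_refl _, hab⟩)
  have hg : IntervalIntegrable (fun s : ℝ => (t - s) ^ (β - 1) * M) volume a' b' := by
    have h := (intervalIntegral.intervalIntegrable_rpow' (a := t - a') (b := t - b')
      (by linarith : (-1:ℝ) < β - 1)).comp_sub_left t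
    simpa [sub_sub_cancel] using h.mul_const M
  refine hg.mono_fun (((ker_meas β γ t).mul hf).aestronglyMeasurable) ?_
  refine (ae_restrict_iff' measurableSet_uIoc).mpr (ae_of_all _ ?_)
  intro s hs
  rw [Set.uIoc_of_le hab] at hs
  have hs0 : 0 ≤ s := le_trans h0 hs.1.le
  have h1 : 0 ≤ t - s := by linarith [hs.2]
  have h2 : (0:ℝ) ≤ (t - s) ^ (β - 1) := Real.rpow_nonneg h1 _
  have h3 : (1 + s) ^ (-γ) ≤ 1 :=
    Real.rpow_le_one_of_one_le_of_nonpos (by linarith) (by linarith)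
  have h4 : (0:ℝ) ≤ (1 + s) ^ (-γ) := Real.rpow_nonneg (by linarith) _
  have hfs : |f s| ≤ M := hM s ⟨hs.1.le, hs.2⟩
  simp only [Real.norm_eq_abs]
  calc |(t - s) ^ (β - 1) * (1 + s) ^ (-γ) * f s|
      = (t - s) ^ (β - 1) * (1 + s) ^ (-γ) * |f s| := by
        rw [abs_mul, abs_of_nonneg (mul_nonneg h2 h4)]
    _ ≤ (t - s) ^ (β - 1) * 1 * M := by
        apply mul_le_mul
        · exact mul_le_mul_of_nonneg_left h3 h2
        · exact hfs
        · exact abs_nonneg _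
        · nlinarith
    _ ≤ |(t - s) ^ (β - 1) * M| := by rw [mul_one]; exact le_abs_self _



lemma integral_rpow_reflect {β t a' b' : ℝ} (hβ : 0 < β) :
    ∫ s in a'..b', (t - s) ^ (β - 1) = ((t - a') ^ β - (t - b') ^ β) / β := by
  have h1 : (∫ s in a'..b', (t - s) ^ (β - 1)) = ∫ x in t - b'..t - a', x ^ (β - 1) :=
    intervalIntegral.integral_comp_sub_left (fun x : ℝ => x ^ (β - 1)) t
  rw [h1, integral_rpow (Or.inl (by linarith : (-1:ℝ) < β - 1))]
  rw [show β - 1 + 1 = β by ring]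

lemma ker_window_le {β γ t a' b' : ℝ} (hβ : 0 < β) (hβ1 : β ≤ 1) (hγ : 0 ≤ γ) (h0 : 0 ≤ a')
    (hab : a' ≤ b') (hbt : b' ≤ t) :
    ∫ s in a'..b', (t - s) ^ (β - 1) * (1 + s) ^ (-γ) ≤ (b' - a') ^ β / β := by
  have hg : IntervalIntegrable (fun s : ℝ => (t - s) ^ (β - 1)) volume a' b' := by
    have h := (intervalIntegral.intervalIntegrable_rpow' (a := t - a') (b := t - b')
      (by linarith : (-1:ℝ) < β - 1)).comp_sub_left t
    simpa [sub_sub_cancel] using h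
  have step1 : (∫ s in a'..b', (t - s) ^ (β - 1) * (1 + s) ^ (-γ))
      ≤ ∫ s in a'..b', (t - s) ^ (β - 1) := by
    apply intervalIntegral.integral_mono_on hab (int_ker hβ hγ h0 hab hbt) hg
    intro s hs
    have h2 : (0:ℝ) ≤ (t - s) ^ (β - 1) := Real.rpow_nonneg (by linarith [hs.2]) _
    have h3 : (1 + s) ^ (-γ) ≤ 1 :=
      Real.rpow_le_one_of_one_le_of_nonpos (by linarith [hs.1, h0]) (by linarith)
    exact mul_le_of_le_one_right h2 h3
  have step2 : ((t - a') ^ β - (t - b') ^ β) / β ≤ (b' - a') ^ β / β := by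
    have hsub : (t - a') ^ β ≤ (t - b') ^ β + (b' - a') ^ β := by
      have := rpow_subadd (x := t - b') (y := b' - a') (by linarith) (by linarith) hβ.le hβ1
      rw [show t - b' + (b' - a') = t - a' by ring] at this
      exact this
    have hβ' : (0:ℝ) < β := hβ
    apply (div_le_div_iff_of_pos_right hβ').mpr ?_ |>.trans_eq rfl <;> try linarith
  calc (∫ s in a'..b', (t - s) ^ (β - 1) * (1 + s) ^ (-γ))
      ≤ ∫ s in a'..b', (t - s) ^ (β - 1) := step1
    _ = ((t - a') ^ β - (t - b') ^ β) / β := integral_rpow_reflect hβ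
    _ ≤ (b' - a') ^ β / β := step2



lemma int_rpow_shift {γ a' b' : ℝ} (h0 : 0 ≤ a') (hab : a' ≤ b') :
    IntervalIntegrable (fun s : ℝ => (1 + s) ^ (-γ)) volume a' b' := by
  apply ContinuousOn.intervalIntegrable
  apply ContinuousOn.rpow_const ((continuous_const.add continuous_id).continuousOn)
  intro x hx
  rw [Set.uIcc_of_le hab] at hx
  exact Or.inl (by have := hx.1; intro h; simp only [Pi.add_apply, id_eq] at h; linarith)

lemma integral_rpow_shift {γ a' b' : ℝ} (h0 : 0 ≤ a') (hab : a' ≤ b') (hγ1 : γ ≠ 1) :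
    ∫ s in a'..b', (1 + s) ^ (-γ)
      = ((1 + b') ^ (1 - γ) - (1 + a') ^ (1 - γ)) / (1 - γ) := by
  have h1 : (∫ s in a'..b', (1 + s) ^ (-γ)) = ∫ x in 1 + a'..1 + b', x ^ (-γ) :=
    intervalIntegral.integral_comp_add_left (fun x : ℝ => x ^ (-γ)) 1
  rw [h1, integral_rpow (Or.inr ⟨by simpa using hγ1, by
      rw [Set.uIcc_of_le (by linarith : 1 + a' ≤ 1 + b')]
      intro hmem
      have := hmem.1
      linarith⟩)]
  rw [show -γ + 1 = 1 - γ by ring]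



lemma int_rpow_reflect {β t a' b' : ℝ} (hβ : 0 < β) :
    IntervalIntegrable (fun s : ℝ => (t - s) ^ (β - 1)) volume a' b' := by
  have h := (intervalIntegral.intervalIntegrable_rpow' (a := t - a') (b := t - b')
    (by linarith : (-1:ℝ) < β - 1)).comp_sub_left t
  simpa [sub_sub_cancel] using h

lemma tail_bound {β γ : ℝ} (hβ0 : 0 < β) (hβ1 : β ≤ 1) (hβγ : β < γ) (hsp : β = 1 ∨ γ < 1) :
    ∃ K : ℝ, 0 < K ∧ ∀ τ t : ℝ, 0 ≤ τ → τ ≤ t →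
      (∫ s in τ..t, (t - s) ^ (β - 1) * (1 + s) ^ (-γ)) ≤ K * (1 + τ) ^ (β - γ) := by
  rcases hsp with hsp | hsp
  · -- β = 1, γ > 1
    subst hsp
    have hγ1 : 1 < γ := hβγ
    refine ⟨1 / (γ - 1), by apply div_pos one_pos; linarith, ?_⟩
    intro τ t h0 hτt
    have hker : (fun s : ℝ => (t - s) ^ ((1:ℝ) - 1) * (1 + s) ^ (-γ))
        = fun s : ℝ => (1 + s) ^ (-γ) := by
      funext s; rw [sub_self, Real.rpow_zero, one_mul]
    rw [hker, integral_rpow_shift h0 hτt (by linarith)]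
    have h2 : (0:ℝ) ≤ (1 + t) ^ (1 - γ) := Real.rpow_nonneg (by linarith) _
    have heq : ((1 + t) ^ (1 - γ) - (1 + τ) ^ (1 - γ)) / (1 - γ)
        = ((1 + τ) ^ (1 - γ) - (1 + t) ^ (1 - γ)) / (γ - 1) := by
      rw [div_eq_div_iff (by linarith) (by linarith)]; ring
    rw [heq]
    calc ((1 + τ) ^ (1 - γ) - (1 + t) ^ (1 - γ)) / (γ - 1)
        ≤ (1 + τ) ^ (1 - γ) / (γ - 1) := by
          rw [div_le_div_iff₀ (by linarith) (by linarith)]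
          nlinarith [h2]
      _ = 1 / (γ - 1) * (1 + τ) ^ (1 - γ) := by ring
  · -- γ < 1, hence β < 1
    have hβlt1 : β < 1 := lt_of_lt_of_le hβγ hsp.le
    have hγ0 : 0 < γ := lt_trans hβ0 hβγ
    have hK1 : (0:ℝ) < 2 / β := div_pos two_pos hβ0
    have hK2 : (0:ℝ) < 2 / (1 - γ) := div_pos two_pos (by linarith)
    refine ⟨2 / β + 2 / (1 - γ) + 2, by linarith, ?_⟩
    intro τ t h0 hτt
    obtain ⟨P, hP⟩ : ∃ x : ℝ, x = (1 + τ) ^ (β - γ) := ⟨_, rfl⟩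
    have h1τ : (0:ℝ) < 1 + τ := by linarith
    have hP0 : 0 < P := hP ▸ Real.rpow_pos_of_pos h1τ _
    rw [← hP]
    have h1β : (0:ℝ) < 1 / β := by positivity
    have honeβ : 1 / β ≤ 2 / β := by gcongr; norm_num
    rcases le_or_gt (t - τ) 1 with hcase | hcase
    · -- short interval
      have step1 : (∫ s in τ..t, (t - s) ^ (β - 1) * (1 + s) ^ (-γ))
          ≤ ∫ s in τ..t, (t - s) ^ (β - 1) * (1 + τ) ^ (-γ) := by
        apply intervalIntegral.integral_mono_on hτt (int_ker hβ0 hγ0.le h0 hτt le_rfl)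
          ((int_rpow_reflect hβ0).mul_const _)
        intro s hs
        have h2 : (0:ℝ) ≤ (t - s) ^ (β - 1) := Real.rpow_nonneg (by linarith [hs.2]) _
        have h3 : (1 + s) ^ (-γ) ≤ (1 + τ) ^ (-γ) :=
          Real.rpow_le_rpow_of_nonpos h1τ (by linarith [hs.1]) (by linarith)
        exact mul_le_mul_of_nonneg_left h3 h2
      have step2 : (∫ s in τ..t, (t - s) ^ (β - 1) * (1 + τ) ^ (-γ))
          = ((t - τ) ^ β - 0 ^ β) / β * (1 + τ) ^ (-γ) := by
        rw [intervalIntegral.integral_mul_const, integral_rpow_reflect hβ0, sub_self]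
      have h4 : (t - τ) ^ β ≤ 1 := Real.rpow_le_one (by linarith) hcase hβ0.le
      have h5 : (1 + τ) ^ (-γ) ≤ P := by
        rw [hP]
        exact Real.rpow_le_rpow_of_exponent_le (by linarith) (by linarith)
      have h6 : (0:ℝ) ≤ (1 + τ) ^ (-γ) := Real.rpow_nonneg (by linarith) _
      calc (∫ s in τ..t, (t - s) ^ (β - 1) * (1 + s) ^ (-γ))
          ≤ ((t - τ) ^ β - 0 ^ β) / β * (1 + τ) ^ (-γ) := step1.trans step2.le
        _ ≤ (1 / β) * P := by
            rw [Real.zero_rpow hβ0.ne', sub_zero]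
            apply mul_le_mul _ h5 h6 h1β.le
            rw [div_le_div_iff₀ hβ0 hβ0]
            nlinarith
        _ ≤ (2 / β + 2 / (1 - γ) + 2) * P :=
            mul_le_mul_of_nonneg_right (by linarith) hP0.le
    · -- long interval: split at midpoint
      obtain ⟨m, hm⟩ : ∃ x : ℝ, x = (τ + t) / 2 := ⟨_, rfl⟩
      obtain ⟨L, hL⟩ : ∃ x : ℝ, x = (t - τ) / 2 := ⟨_, rfl⟩
      have hL0 : (0:ℝ) < L := by rw [hL]; linarith
      have hτm : τ ≤ m := by rw [hm]; linarith
      have hmt : m ≤ t := by rw [hm]; linarith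
      have hm0 : 0 ≤ m := le_trans h0 hτm
      have hmτL : m - τ = L := by rw [hm, hL]; ring
      have htmL : t - m = L := by rw [hm, hL]; ring
      have h1m : (0:ℝ) < 1 + m := by linarith
      -- split
      have hsplit : (∫ s in τ..t, (t - s) ^ (β - 1) * (1 + s) ^ (-γ))
          = (∫ s in τ..m, (t - s) ^ (β - 1) * (1 + s) ^ (-γ))
            + ∫ s in m..t, (t - s) ^ (β - 1) * (1 + s) ^ (-γ) :=
        (intervalIntegral.integral_add_adjacent_intervals
          (int_ker hβ0 hγ0.le h0 hτm hmt) (int_ker hβ0 hγ0.le hm0 hmt le_rfl)).symm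
      -- Part 2 bound
      have hpart2 : (∫ s in m..t, (t - s) ^ (β - 1) * (1 + s) ^ (-γ)) ≤ (1 / β) * P := by
        have step1 : (∫ s in m..t, (t - s) ^ (β - 1) * (1 + s) ^ (-γ))
            ≤ ∫ s in m..t, (t - s) ^ (β - 1) * (1 + m) ^ (-γ) := by
          apply intervalIntegral.integral_mono_on hmt (int_ker hβ0 hγ0.le hm0 hmt le_rfl)
            ((int_rpow_reflect hβ0).mul_const _)
          intro s hs
          have h2 : (0:ℝ) ≤ (t - s) ^ (β - 1) := Real.rpow_nonneg (by linarith [hs.2]) _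
          have h3 : (1 + s) ^ (-γ) ≤ (1 + m) ^ (-γ) :=
            Real.rpow_le_rpow_of_nonpos h1m (by linarith [hs.1]) (by linarith)
          exact mul_le_mul_of_nonneg_left h3 h2
        have step2 : (∫ s in m..t, (t - s) ^ (β - 1) * (1 + m) ^ (-γ))
            = L ^ β / β * (1 + m) ^ (-γ) := by
          rw [intervalIntegral.integral_mul_const, integral_rpow_reflect hβ0, sub_self,
            Real.zero_rpow hβ0.ne', sub_zero, htmL]
        have hsplitexp : (1 + m) ^ (-γ) = (1 + m) ^ (-β) * (1 + m) ^ (β - γ) := by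
          rw [← Real.rpow_add h1m]; congr 1; ring
        have hb1 : (1 + m) ^ (-β) ≤ L ^ (-β) :=
          Real.rpow_le_rpow_of_nonpos hL0 (by linarith) (by linarith)
        have hb2 : (1 + m) ^ (β - γ) ≤ P := by
          rw [hP]
          exact Real.rpow_le_rpow_of_nonpos h1τ (by linarith) (by linarith)
        have hLβ : (0:ℝ) < L ^ β := Real.rpow_pos_of_pos hL0 _
        have hLβinv : L ^ (-β) = (L ^ β)⁻¹ := Real.rpow_neg hL0.le _
        have hbm2 : (0:ℝ) ≤ (1 + m) ^ (β - γ) := Real.rpow_nonneg h1m.le _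
        have hbm1 : (0:ℝ) ≤ (1 + m) ^ (-β) := Real.rpow_nonneg h1m.le _
        calc (∫ s in m..t, (t - s) ^ (β - 1) * (1 + s) ^ (-γ))
            ≤ L ^ β / β * (1 + m) ^ (-γ) := step1.trans step2.le
          _ = L ^ β / β * ((1 + m) ^ (-β) * (1 + m) ^ (β - γ)) := by rw [hsplitexp]
          _ ≤ L ^ β / β * (L ^ (-β) * P) := by
              apply mul_le_mul_of_nonneg_left _ (by positivity)
              exact mul_le_mul hb1 hb2 hbm2 (by positivity)
          _ = (1 / β) * P := by
              rw [hLβinv]; field_simp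
      -- Part 1 bound
      have hpart1 : (∫ s in τ..m, (t - s) ^ (β - 1) * (1 + s) ^ (-γ))
          ≤ (1 + 2 / (1 - γ)) * P := by
        have step1 : (∫ s in τ..m, (t - s) ^ (β - 1) * (1 + s) ^ (-γ))
            ≤ ∫ s in τ..m, L ^ (β - 1) * (1 + s) ^ (-γ) := by
          apply intervalIntegral.integral_mono_on hτm (int_ker hβ0 hγ0.le h0 hτm hmt)
            ((int_rpow_shift h0 hτm).const_mul _)
          intro s hs
          have h4 : (0:ℝ) ≤ (1 + s) ^ (-γ) := Real.rpow_nonneg (by linarith [hs.1]) _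
          have h3 : (t - s) ^ (β - 1) ≤ L ^ (β - 1) := by
            apply Real.rpow_le_rpow_of_nonpos hL0 _ (by linarith)
            have := hs.2; linarith
          exact mul_le_mul_of_nonneg_right h3 h4
        rw [intervalIntegral.integral_const_mul] at step1
        have hE0 : (0:ℝ) ≤ L ^ (β - 1) := Real.rpow_nonneg hL0.le _
        rcases le_or_gt L (1 + τ) with hsub | hsub
        · -- L ≤ 1 + τ
          have hE : (∫ s in τ..m, (1 + s) ^ (-γ)) ≤ L * (1 + τ) ^ (-γ) := by
            have : (∫ s in τ..m, (1 + s) ^ (-γ)) ≤ ∫ s in τ..m, (1 + τ) ^ (-γ) := by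
              apply intervalIntegral.integral_mono_on hτm (int_rpow_shift h0 hτm)
                intervalIntegrable_const
              intro s hs
              exact Real.rpow_le_rpow_of_nonpos h1τ (by linarith [hs.1]) (by linarith)
            rw [intervalIntegral.integral_const, smul_eq_mul, hmτL] at this
            exact this
          have hchain : L ^ (β - 1) * (∫ s in τ..m, (1 + s) ^ (-γ))
              ≤ L ^ (β - 1) * (L * (1 + τ) ^ (-γ)) := mul_le_mul_of_nonneg_left hE hE0
          have hcollapse : L ^ (β - 1) * (L * (1 + τ) ^ (-γ)) = L ^ β * (1 + τ) ^ (-γ) := by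
            rw [show L * (1 + τ) ^ (-γ) = L ^ (1:ℝ) * (1 + τ) ^ (-γ) by rw [Real.rpow_one],
              ← mul_assoc, ← Real.rpow_add hL0]
            norm_num
          have hfin : L ^ β * (1 + τ) ^ (-γ) ≤ P := by
            have h7 : L ^ β ≤ (1 + τ) ^ β := Real.rpow_le_rpow hL0.le hsub hβ0.le
            have h8 : (1 + τ) ^ β * (1 + τ) ^ (-γ) = P := by
              rw [hP, ← Real.rpow_add h1τ]
              all_goals congr 1
              all_goals ring
            have h9 : (0:ℝ) ≤ (1 + τ) ^ (-γ) := Real.rpow_nonneg h1τ.le _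
            calc L ^ β * (1 + τ) ^ (-γ) ≤ (1 + τ) ^ β * (1 + τ) ^ (-γ) :=
                  mul_le_mul_of_nonneg_right h7 h9
              _ = P := h8
          have hfinal : (∫ s in τ..m, (t - s) ^ (β - 1) * (1 + s) ^ (-γ)) ≤ P :=
            step1.trans (hchain.trans (hcollapse ▸ hfin))
          calc (∫ s in τ..m, (t - s) ^ (β - 1) * (1 + s) ^ (-γ)) ≤ P := hfinal
            _ ≤ (1 + 2 / (1 - γ)) * P := by
                rw [add_mul, one_mul]
                have : 0 ≤ 2 / (1 - γ) * P := mul_nonneg hK2.le hP0.le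
                linarith
        · -- 1 + τ < L
          have hE : (∫ s in τ..m, (1 + s) ^ (-γ)) ≤ (2 / (1 - γ)) * L ^ (1 - γ) := by
            rw [integral_rpow_shift h0 hτm (by linarith)]
            have h1mval : 1 + m = 1 + τ + L := by rw [hm, hL]; ring
            have hub : (1 + m) ^ (1 - γ) ≤ (2 * L) ^ (1 - γ) := by
              apply Real.rpow_le_rpow h1m.le _ (by linarith)
              rw [h1mval]; linarith
            have h2L : (2 * L) ^ (1 - γ) = 2 ^ (1 - γ) * L ^ (1 - γ) :=
              Real.mul_rpow (by norm_num) hL0.le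
            have h2e : (2:ℝ) ^ (1 - γ) ≤ 2 ^ (1:ℝ) :=
              Real.rpow_le_rpow_of_exponent_le one_le_two (by linarith)
            have hLe : (0:ℝ) ≤ L ^ (1 - γ) := Real.rpow_nonneg hL0.le _
            have hτe : (0:ℝ) ≤ (1 + τ) ^ (1 - γ) := Real.rpow_nonneg h1τ.le _
            rw [Real.rpow_one] at h2e
            rw [div_le_iff₀ (by linarith : (0:ℝ) < 1 - γ) ] -- goal: (A - B)/(1-γ) ≤ C...
            ·
              have : (1 + m) ^ (1 - γ) ≤ 2 * L ^ (1 - γ) := by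
                calc (1 + m) ^ (1 - γ) ≤ (2 * L) ^ (1 - γ) := hub
                  _ = 2 ^ (1 - γ) * L ^ (1 - γ) := h2L
                  _ ≤ 2 * L ^ (1 - γ) := mul_le_mul_of_nonneg_right h2e hLe
              calc (1 + m) ^ (1 - γ) - (1 + τ) ^ (1 - γ) ≤ 2 * L ^ (1 - γ) := by linarith
                _ = 2 / (1 - γ) * L ^ (1 - γ) * (1 - γ) := by
                    rw [div_mul_eq_mul_div, div_mul_eq_mul_div,
                      mul_div_assoc, div_self (by linarith : (1:ℝ) - γ ≠ 0), mul_one]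
          have hchain := mul_le_mul_of_nonneg_left hE hE0
          have hpows : L ^ (β - 1) * L ^ (1 - γ) = L ^ (β - γ) := by
            rw [← Real.rpow_add hL0]; congr 1; ring
          have hcollapse : L ^ (β - 1) * (2 / (1 - γ) * L ^ (1 - γ))
              = 2 / (1 - γ) * L ^ (β - γ) := by rw [← hpows]; ring
          have hLP : L ^ (β - γ) ≤ P := by
            rw [hP]
            exact Real.rpow_le_rpow_of_nonpos h1τ hsub.le (by linarith)
          have hfinal : (∫ s in τ..m, (t - s) ^ (β - 1) * (1 + s) ^ (-γ))
              ≤ 2 / (1 - γ) * P := by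
            refine step1.trans (hchain.trans ?_)
            rw [hcollapse]
            exact mul_le_mul_of_nonneg_left hLP hK2.le
          calc (∫ s in τ..m, (t - s) ^ (β - 1) * (1 + s) ^ (-γ)) ≤ 2 / (1 - γ) * P := hfinal
            _ ≤ (1 + 2 / (1 - γ)) * P := by rw [add_mul, one_mul]; linarith
      rw [hsplit]
      calc (∫ s in τ..m, (t - s) ^ (β - 1) * (1 + s) ^ (-γ))
            + (∫ s in m..t, (t - s) ^ (β - 1) * (1 + s) ^ (-γ))
          ≤ (1 + 2 / (1 - γ)) * P + 1 / β * P := add_le_add hpart1 hpart2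
        _ ≤ (2 / β + 2 / (1 - γ) + 2) * P := by
            rw [← add_mul]
            exact mul_le_mul_of_nonneg_right (by linarith) hP0.le


lemma engine {T : ENNReal} {b β γ a : ℝ} {f : ℝ → ℝ}
    (hb : 0 ≤ b) (hβ0 : 0 < β) (hβ1 : β ≤ 1) (hγ : 0 ≤ γ) (ha : 0 ≤ a)
    (hmeas : Measurable f)
    (hf0 : ∀ t : ℝ, 0 ≤ t → ENNReal.ofReal t < T → 0 ≤ f t)
    (hbdd : ∀ t : ℝ, 0 ≤ t → ENNReal.ofReal t < T → BddAbove (f '' Set.Icc 0 t))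
    (hineq : ∀ t : ℝ, 0 ≤ t → ENNReal.ofReal t < T →
      f t ≤ a + b * ∫ s in (0:ℝ)..t, (t - s) ^ (β - 1) * (1 + s) ^ (-γ) * f s)
    (τ B θ : ℝ) (hτ0 : 0 ≤ τ) (hB : 0 ≤ B)
    (hhist : ∀ s : ℝ, 0 ≤ s → s ≤ τ → ENNReal.ofReal s < T → f s ≤ B)
    (hwin : ∀ u : ℝ, τ ≤ u → u ≤ θ →
      b * ∫ s in τ..u, (u - s) ^ (β - 1) * (1 + s) ^ (-γ) ≤ 1 / 2) :
    ∀ t : ℝ, 0 ≤ t → t ≤ θ → ENNReal.ofReal t < T →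
      f t ≤ max B (2 * (a + b * (τ ^ β / β) * B)) := by
  intro t ht0 htθ htT
  by_cases htτ : t ≤ τ
  · exact (hhist t ht0 htτ htT).trans (le_max_left _ _)
  push_neg at htτ
  set M := sSup (f '' Set.Icc 0 t) with hM
  have hbddt := hbdd t ht0 htT
  have hne : (f '' Set.Icc 0 t).Nonempty := ⟨f 0, Set.mem_image_of_mem f ⟨le_refl 0, ht0⟩⟩
  have hfleM : ∀ u : ℝ, 0 ≤ u → u ≤ t → f u ≤ M := fun u h1 h2 =>
    le_csSup hbddt (Set.mem_image_of_mem f ⟨h1, h2⟩)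
  have h0T : (ENNReal.ofReal 0) < T := lt_of_le_of_lt (by simp) htT
  have hM0 : 0 ≤ M := le_trans (hf0 0 le_rfl (by simpa using h0T)) (hfleM 0 le_rfl ht0)
  have habs : ∀ s : ℝ, 0 ≤ s → s ≤ t → |f s| ≤ M := by
    intro s h1 h2
    have hsT : ENNReal.ofReal s < T := lt_of_le_of_lt (ENNReal.ofReal_le_ofReal h2) htT
    rw [abs_of_nonneg (hf0 s h1 hsT)]
    exact hfleM s h1 h2
  have key : ∀ u : ℝ, 0 ≤ u → u ≤ t →
      f u ≤ max B (a + b * (τ ^ β / β) * B + M / 2) := by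
    intro u hu0 hut
    have huT : ENNReal.ofReal u < T := lt_of_le_of_lt (ENNReal.ofReal_le_ofReal hut) htT
    by_cases huτ : u ≤ τ
    · exact (hhist u hu0 huτ huT).trans (le_max_left _ _)
    push_neg at huτ
    have hτu : τ ≤ u := huτ.le
    have h1 := hineq u hu0 huT
    have hI1 : IntervalIntegrable
        (fun s : ℝ => (u - s) ^ (β - 1) * (1 + s) ^ (-γ) * f s) volume 0 τ :=
      int_ker_mul hβ0 hγ le_rfl hτ0 hτu hmeas
        (fun s hs => habs s hs.1 (le_trans hs.2 (le_trans hτu hut)))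
    have hI2 : IntervalIntegrable
        (fun s : ℝ => (u - s) ^ (β - 1) * (1 + s) ^ (-γ) * f s) volume τ u :=
      int_ker_mul hβ0 hγ hτ0 hτu le_rfl hmeas
        (fun s hs => habs s (le_trans hτ0 hs.1) (le_trans hs.2 hut))
    rw [← intervalIntegral.integral_add_adjacent_intervals hI1 hI2] at h1
    -- head bound
    have hA : (∫ s in (0:ℝ)..τ, (u - s) ^ (β - 1) * (1 + s) ^ (-γ) * f s)
        ≤ τ ^ β / β * B := by
      have hmono : (∫ s in (0:ℝ)..τ, (u - s) ^ (β - 1) * (1 + s) ^ (-γ) * f s)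
          ≤ ∫ s in (0:ℝ)..τ, (u - s) ^ (β - 1) * (1 + s) ^ (-γ) * B := by
        apply intervalIntegral.integral_mono_on hτ0 hI1
          ((int_ker hβ0 hγ le_rfl hτ0 hτu).mul_const _)
        intro s hs
        have hker : (0:ℝ) ≤ (u - s) ^ (β - 1) * (1 + s) ^ (-γ) :=
          mul_nonneg (Real.rpow_nonneg (by linarith [hs.2] : (0:ℝ) ≤ u - s) _)
            (Real.rpow_nonneg (by linarith [hs.1]) _)
        have hfsB : f s ≤ B := hhist s hs.1 hs.2
          (lt_of_le_of_lt (ENNReal.ofReal_le_ofReal (le_trans hs.2 (hτu.trans hut))) htT)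
        exact mul_le_mul_of_nonneg_left hfsB hker
      rw [intervalIntegral.integral_mul_const] at hmono
      refine hmono.trans ?_
      have hw := ker_window_le (t := u) hβ0 hβ1 hγ le_rfl hτ0 hτu
      rw [sub_zero] at hw
      exact mul_le_mul_of_nonneg_right hw hB
    -- window bound
    have hC : b * (∫ s in τ..u, (u - s) ^ (β - 1) * (1 + s) ^ (-γ) * f s)
        ≤ M * (1 / 2) := by
      have hmono : (∫ s in τ..u, (u - s) ^ (β - 1) * (1 + s) ^ (-γ) * f s)
          ≤ ∫ s in τ..u, (u - s) ^ (β - 1) * (1 + s) ^ (-γ) * M := by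
        apply intervalIntegral.integral_mono_on hτu hI2
          ((int_ker hβ0 hγ hτ0 hτu le_rfl).mul_const _)
        intro s hs
        have hker : (0:ℝ) ≤ (u - s) ^ (β - 1) * (1 + s) ^ (-γ) :=
          mul_nonneg (Real.rpow_nonneg (by linarith [hs.2] : (0:ℝ) ≤ u - s) _)
            (Real.rpow_nonneg (by linarith [hs.1, hτ0]) _)
        exact mul_le_mul_of_nonneg_left
          (hfleM s (le_trans hτ0 hs.1) (le_trans hs.2 hut)) hker
      rw [intervalIntegral.integral_mul_const] at hmono
      calc b * (∫ s in τ..u, (u - s) ^ (β - 1) * (1 + s) ^ (-γ) * f s)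
          ≤ b * ((∫ s in τ..u, (u - s) ^ (β - 1) * (1 + s) ^ (-γ)) * M) :=
            mul_le_mul_of_nonneg_left hmono hb
        _ = (b * ∫ s in τ..u, (u - s) ^ (β - 1) * (1 + s) ^ (-γ)) * M := by ring
        _ ≤ (1 / 2) * M := mul_le_mul_of_nonneg_right (hwin u hτu (le_trans hut htθ)) hM0
        _ = M * (1 / 2) := by ring
    have hfin : f u ≤ a + b * (τ ^ β / β * B) + M * (1 / 2) := by
      have hbA := mul_le_mul_of_nonneg_left hA hb
      linarith
    refine le_max_of_le_right ?_
    have : b * (τ ^ β / β * B) = b * (τ ^ β / β) * B := by ring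
    linarith [hfin, this]
  have hMle : M ≤ max B (a + b * (τ ^ β / β) * B + M / 2) :=
    csSup_le hne (by rintro x ⟨u, hu, rfl⟩; exact key u hu.1 hu.2)
  have hft : f t ≤ M := hfleM t ht0 le_rfl
  rcases le_max_iff.mp hMle with h | h
  · exact le_max_of_le_left (hft.trans h)
  · refine le_max_of_le_right ?_
    linarith


def cseq (H : ℝ) : ℕ → ℝ
  | 0 => 1
  | k+1 => max (cseq H k) (2 * (1 + H * cseq H k))

lemma cseq_one_le (H : ℝ) : ∀ k, 1 ≤ cseq H k
  | 0 => le_refl 1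
  | k+1 => le_trans (cseq_one_le H k) (le_max_left _ _)

lemma cseq_le_succ (H : ℝ) (k : ℕ) : cseq H k ≤ cseq H (k+1) := le_max_left _ _

lemma cseq_succ_ge (H : ℝ) (k : ℕ) : 2 * (1 + H * cseq H k) ≤ cseq H (k+1) := le_max_right _ _


end GronwallAux

open GronwallAux


open GronwallAux

theorem gronwall_singular_kernel (b β γ : ℝ) (hb : 0 ≤ b) (hβ : 0 < β) (hβ1 : β ≤ 1)
    (hβγ : β < γ) :
    ∃ C : ℝ, 0 < C ∧
      ∀ (T : ENNReal), 0 < T → ∀ (f : ℝ → ℝ) (a : ℝ), 0 ≤ a →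
        Measurable f →
        (∀ t : ℝ, 0 ≤ t → ENNReal.ofReal t < T → 0 ≤ f t) →
        (∀ t : ℝ, 0 ≤ t → ENNReal.ofReal t < T → BddAbove (f '' Set.Icc 0 t)) →
        (∀ t : ℝ, 0 ≤ t → ENNReal.ofReal t < T →
          f t ≤ a + b * ∫ s in (0:ℝ)..t, (t - s) ^ (β - 1) * (1 + s) ^ (-γ) * f s) →
        ∀ t : ℝ, 0 ≤ t → ENNReal.ofReal t < T → f t ≤ a * C := by
  -- reduced exponent γ₀
  obtain ⟨γ₀, hγ₀⟩ : ∃ x : ℝ, x = if β = 1 then γ else min γ ((1 + β) / 2) := ⟨_, rfl⟩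
  have hβγ₀ : β < γ₀ := by
    rw [hγ₀]; split
    · exact hβγ
    · rename_i h1
      have hβlt : β < 1 := lt_of_le_of_ne hβ1 h1
      exact lt_min hβγ (by linarith)
  have hγ₀γ : γ₀ ≤ γ := by
    rw [hγ₀]; split
    · exact le_refl γ
    · exact min_le_left _ _
  have hsp : β = 1 ∨ γ₀ < 1 := by
    rw [hγ₀]; split
    · left; assumption
    · rename_i h1
      have hβlt : β < 1 := lt_of_le_of_ne hβ1 h1
      right
      exact lt_of_le_of_lt (min_le_right _ _) (by linarith)
  have hγ₀0 : 0 < γ₀ := lt_trans hβ hβγ₀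
  -- tail constant
  obtain ⟨K, hK0, hKtail⟩ := tail_bound hβ hβ1 hβγ₀ hsp
  -- window length δ
  obtain ⟨δ, hδ⟩ : ∃ x : ℝ, x = (β / (2 * b + 2)) ^ (β⁻¹) := ⟨_, rfl⟩
  have hδ0 : 0 < δ := hδ ▸ Real.rpow_pos_of_pos (by positivity) _
  have hδβ : δ ^ β = β / (2 * b + 2) := by
    rw [hδ, ← Real.rpow_mul (by positivity), inv_mul_cancel₀ hβ.ne', Real.rpow_one]
  have hwinδ : ∀ τ u : ℝ, 0 ≤ τ → τ ≤ u → u ≤ τ + δ →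
      b * ∫ s in τ..u, (u - s) ^ (β - 1) * (1 + s) ^ (-γ₀) ≤ 1 / 2 := by
    intro τ u hτ0 hτu huδ
    have hw := ker_window_le (t := u) hβ hβ1 hγ₀0.le hτ0 hτu le_rfl
    have hpow : (u - τ) ^ β ≤ δ ^ β :=
      Real.rpow_le_rpow (by linarith) (by linarith) hβ.le
    have h1 : b * ∫ s in τ..u, (u - s) ^ (β - 1) * (1 + s) ^ (-γ₀) ≤ b * (δ ^ β / β) := by
      apply mul_le_mul_of_nonneg_left _ hb
      exact hw.trans ((div_le_div_iff_of_pos_right hβ).mpr hpow)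
    refine h1.trans ?_
    rw [hδβ, div_div, mul_comm (2 * b + 2) β, ← div_div, div_self hβ.ne']
    rw [mul_one_div, div_le_div_iff₀ (by linarith) two_pos]
    linarith
  -- tail start point
  obtain ⟨τs, hτs⟩ : ∃ x : ℝ, x = (2 * b * K + 1) ^ ((γ₀ - β)⁻¹) := ⟨_, rfl⟩
  have hτs0 : 0 ≤ τs := hτs ▸ (Real.rpow_pos_of_pos (by positivity) _).le
  have hτspow : τs ^ (γ₀ - β) = 2 * b * K + 1 := by
    rw [hτs, ← Real.rpow_mul (by positivity),
      inv_mul_cancel₀ (by intro h; exact absurd (by linarith : γ₀ = β) (by intro h2; linarith)),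
      Real.rpow_one]
  have hwintail : ∀ τ u : ℝ, τs ≤ τ → τ ≤ u →
      b * ∫ s in τ..u, (u - s) ^ (β - 1) * (1 + s) ^ (-γ₀) ≤ 1 / 2 := by
    intro τ u hτsτ hτu
    have hτ0 : 0 ≤ τ := le_trans hτs0 hτsτ
    have h1τ : (0:ℝ) < 1 + τ := by linarith
    have ht := hKtail τ u hτ0 hτu
    have hbig : 2 * b * K + 1 ≤ (1 + τ) ^ (γ₀ - β) := by
      rw [← hτspow]
      exact Real.rpow_le_rpow hτs0 (by linarith) (by linarith)
    have hXeq : (1 + τ) ^ (β - γ₀) = ((1 + τ) ^ (γ₀ - β))⁻¹ := by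
      rw [show β - γ₀ = -(γ₀ - β) by ring, Real.rpow_neg h1τ.le]
    have hXle : (1 + τ) ^ (β - γ₀) ≤ (2 * b * K + 1)⁻¹ := by
      rw [hXeq]
      exact inv_anti₀ (by positivity) hbig
    have h2 : b * (∫ s in τ..u, (u - s) ^ (β - 1) * (1 + s) ^ (-γ₀))
        ≤ b * (K * (1 + τ) ^ (β - γ₀)) := mul_le_mul_of_nonneg_left ht hb
    refine h2.trans ?_
    have h3 : b * (K * (1 + τ) ^ (β - γ₀)) ≤ b * (K * (2 * b * K + 1)⁻¹) :=
      mul_le_mul_of_nonneg_left (mul_le_mul_of_nonneg_left hXle hK0.le) hb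
    refine h3.trans ?_
    rw [show b * (K * (2 * b * K + 1)⁻¹) = b * K / (2 * b * K + 1) by ring]
    rw [div_le_div_iff₀ (by positivity) two_pos]
    nlinarith [mul_nonneg hb hK0.le]
  -- number of windows and constants
  obtain ⟨N, hN⟩ : ∃ n : ℕ, n = ⌈τs / δ⌉₊ := ⟨_, rfl⟩
  have hNδ : τs ≤ (N : ℝ) * δ := by
    rw [hN]
    have := Nat.le_ceil (τs / δ)
    rw [div_le_iff₀ hδ0] at this
    exact this
  obtain ⟨H, hH⟩ : ∃ x : ℝ, x = b * ((N : ℝ) * δ) ^ β / β := ⟨_, rfl⟩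
  have hH0 : 0 ≤ H := by
    rw [hH]
    have : (0:ℝ) ≤ ((N : ℝ) * δ) ^ β := Real.rpow_nonneg (by positivity) _
    positivity
  refine ⟨cseq H (N + 1), lt_of_lt_of_le one_pos (cseq_one_le H (N + 1)), ?_⟩
  intro T hT f a ha hmeas hf0 hbdd hineq0
  -- bound constants for f on [0,t]
  have habs : ∀ t : ℝ, 0 ≤ t → ENNReal.ofReal t < T →
      ∀ s ∈ Set.Icc (0:ℝ) t, |f s| ≤ sSup (f '' Set.Icc 0 t) := by
    intro t ht0 htT s hs
    have hsT : ENNReal.ofReal s < T := lt_of_le_of_lt (ENNReal.ofReal_le_ofReal hs.2) htT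
    rw [abs_of_nonneg (hf0 s hs.1 hsT)]
    exact le_csSup (hbdd t ht0 htT) (Set.mem_image_of_mem f hs)
  -- reduce the hypothesis to exponent γ₀
  have hineq : ∀ t : ℝ, 0 ≤ t → ENNReal.ofReal t < T →
      f t ≤ a + b * ∫ s in (0:ℝ)..t, (t - s) ^ (β - 1) * (1 + s) ^ (-γ₀) * f s := by
    intro t ht0 htT
    refine (hineq0 t ht0 htT).trans ?_
    have hmono : (∫ s in (0:ℝ)..t, (t - s) ^ (β - 1) * (1 + s) ^ (-γ) * f s)
        ≤ ∫ s in (0:ℝ)..t, (t - s) ^ (β - 1) * (1 + s) ^ (-γ₀) * f s := by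
      apply intervalIntegral.integral_mono_on ht0
        (int_ker_mul hβ (by linarith : (0:ℝ) ≤ γ) le_rfl ht0 le_rfl hmeas (habs t ht0 htT))
        (int_ker_mul hβ hγ₀0.le le_rfl ht0 le_rfl hmeas (habs t ht0 htT))
      intro s hs
      have h1 : (1 + s) ^ (-γ) ≤ (1 + s) ^ (-γ₀) :=
        Real.rpow_le_rpow_of_exponent_le (by linarith [hs.1]) (by linarith)
      have h2 : (0:ℝ) ≤ (t - s) ^ (β - 1) :=
        Real.rpow_nonneg (by linarith [hs.2]) _
      have h3 : 0 ≤ f s := hf0 s hs.1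
        (lt_of_le_of_lt (ENNReal.ofReal_le_ofReal hs.2) htT)
      exact mul_le_mul_of_nonneg_right (mul_le_mul_of_nonneg_left h1 h2) h3
    linarith [mul_le_mul_of_nonneg_left hmono hb]
  -- the inductive bound on [0, N δ]
  have hind : ∀ k : ℕ, k ≤ N → ∀ t : ℝ, 0 ≤ t → t ≤ (k : ℝ) * δ →
      ENNReal.ofReal t < T → f t ≤ a * cseq H k := by
    intro k
    induction k with
    | zero =>
      intro _ t ht0 htk htT
      have ht : t = 0 := le_antisymm (by simpa using htk) ht0
      subst ht
      have h1 := hineq 0 le_rfl htT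
      rw [intervalIntegral.integral_same] at h1
      simpa [cseq] using h1
    | succ k ih =>
      intro hkN t ht0 htk htT
      have hk : k ≤ N := le_of_lt (Nat.lt_of_lt_of_le (Nat.lt_succ_self k) hkN)
      have hkδ0 : (0:ℝ) ≤ (k : ℝ) * δ := by positivity
      have hB : 0 ≤ a * cseq H k :=
        mul_nonneg ha (le_trans zero_le_one (cseq_one_le H k))
      have hwin : ∀ u : ℝ, (k : ℝ) * δ ≤ u → u ≤ ((k : ℕ) + 1 : ℝ) * δ →
          b * ∫ s in ((k : ℝ) * δ)..u, (u - s) ^ (β - 1) * (1 + s) ^ (-γ₀) ≤ 1 / 2 := by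
        intro u h1 h2
        exact hwinδ ((k : ℝ) * δ) u hkδ0 h1 (by push_cast at h2 ⊢; linarith)
      have hmax := engine hb hβ hβ1 hγ₀0.le ha hmeas hf0 hbdd hineq
        ((k : ℝ) * δ) (a * cseq H k) (((k : ℕ) + 1 : ℝ) * δ) hkδ0 hB
        (fun s hs0 hsk hsT => ih hk s hs0 hsk hsT) hwin t ht0 (by push_cast at htk ⊢; linarith)
        htT
      refine hmax.trans (max_le ?_ ?_)
      · exact mul_le_mul_of_nonneg_left (cseq_le_succ H k) ha
      · have hkN' : ((k : ℝ) * δ) ^ β ≤ (((N : ℕ) : ℝ) * δ) ^ β := by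
          apply Real.rpow_le_rpow (by positivity) _ hβ.le
          have : (k : ℝ) ≤ (N : ℝ) := Nat.cast_le.mpr hk
          nlinarith
        have hHk : b * (((k : ℝ) * δ) ^ β / β) ≤ H := by
          rw [hH, mul_div_assoc]
          apply mul_le_mul_of_nonneg_left _ hb
          exact (div_le_div_iff_of_pos_right hβ).mpr hkN'
        have hstep : 2 * (a + b * (((k : ℝ) * δ) ^ β / β) * (a * cseq H k))
            ≤ a * (2 * (1 + H * cseq H k)) := by
          have hc : 0 ≤ cseq H k := le_trans zero_le_one (cseq_one_le H k)
          nlinarith [mul_le_mul_of_nonneg_right hHk (mul_nonneg ha hc)]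
        refine hstep.trans ?_
        exact mul_le_mul_of_nonneg_left (cseq_succ_ge H k) ha
  -- final application on the tail
  intro t ht0 htT
  have hNδ0 : (0:ℝ) ≤ (N : ℝ) * δ := by positivity
  have hB : 0 ≤ a * cseq H N :=
    mul_nonneg ha (le_trans zero_le_one (cseq_one_le H N))
  have hwin : ∀ u : ℝ, (N : ℝ) * δ ≤ u → u ≤ max t ((N : ℝ) * δ) →
      b * ∫ s in ((N : ℝ) * δ)..u, (u - s) ^ (β - 1) * (1 + s) ^ (-γ₀) ≤ 1 / 2 :=
    fun u h1 _ => hwintail ((N : ℝ) * δ) u hNδ h1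
  have hmax := engine hb hβ hβ1 hγ₀0.le ha hmeas hf0 hbdd hineq
    ((N : ℝ) * δ) (a * cseq H N) (max t ((N : ℝ) * δ)) hNδ0 hB
    (fun s hs0 hsN hsT => hind N le_rfl s hs0 hsN hsT) hwin t ht0 (le_max_left _ _) htT
  refine hmax.trans (max_le ?_ ?_)
  · exact mul_le_mul_of_nonneg_left (cseq_le_succ H N) ha
  · have hstep : 2 * (a + b * (((N : ℝ) * δ) ^ β / β) * (a * cseq H N))
        = a * (2 * (1 + H * cseq H N)) := by
      rw [hH]; ring
    rw [hstep]
    exact mul_le_mul_of_nonneg_left (cseq_succ_ge H N) ha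
end

section
/- For 0 < β < 1 the Euler Beta function satisfies B(β, nβ) = O(n^(−β)) as n → +∞; consequently, for any b > 0 the power series Σ_{k≥0} c_k t^(kβ) with c₀ = 1, c_{n+1} = c_n b B(β, nβ+1) converges for every t ≥ 0. -/
open Asymptotics

/-- The Euler Beta function `B(x,y) = Γ(x)Γ(y)/Γ(x+y)`. -/
noncomputable def eulerBeta (x y : ℝ) : ℝ :=
  Real.Gamma x * Real.Gamma y / Real.Gamma (x + y)

lemma eulerBeta_pos {x y : ℝ} (hx : 0 < x) (hy : 0 < y) : 0 < eulerBeta x y := by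
  unfold eulerBeta
  have h1 := Real.Gamma_pos_of_pos hx
  have h2 := Real.Gamma_pos_of_pos hy
  have h3 := Real.Gamma_pos_of_pos (by linarith : (0:ℝ) < x + y)
  positivity

lemma eulerBeta_le (β s : ℝ) (hβ0 : 0 < β) (hβ1 : β < 1) (hs : 0 < s)
    (hs' : 0 < s + β - 1) :
    eulerBeta β s ≤ Real.Gamma β * (s + β - 1) ^ (-β) := by
  have hsb : 0 < s + β := by linarith
  have hA : 0 < Real.Gamma (s + β) := Real.Gamma_pos_of_pos hsb
  have hB : 0 < Real.Gamma (s + β - 1) := Real.Gamma_pos_of_pos hs'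
  have hS : 0 < Real.Gamma s := Real.Gamma_pos_of_pos hs
  have hβΓ : 0 < Real.Gamma β := Real.Gamma_pos_of_pos hβ0
  -- log-convexity
  have hconv := Real.convexOn_log_Gamma.2 (Set.mem_Ioi.2 hs') (Set.mem_Ioi.2 hsb)
    hβ0.le (by linarith : (0:ℝ) ≤ 1 - β) (by ring)
  have hcomb : β • (s + β - 1) + (1 - β) • (s + β) = s := by
    simp only [smul_eq_mul]; ring
  rw [hcomb] at hconv
  simp only [Function.comp_apply, smul_eq_mul] at hconv
  -- exponentiate
  have key : Real.Gamma s ≤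
      Real.Gamma (s + β - 1) ^ β * Real.Gamma (s + β) ^ (1 - β) := by
    have := Real.exp_le_exp.2 hconv
    rwa [Real.exp_log hS, Real.exp_add, mul_comm β, mul_comm (1 - β), ← Real.rpow_def_of_pos hB,
      ← Real.rpow_def_of_pos hA] at this
  -- Γ(s+β-1) = Γ(s+β)/(s+β-1)
  have hrec : Real.Gamma (s + β - 1) = Real.Gamma (s + β) / (s + β - 1) := by
    have h := Real.Gamma_add_one (s := s + β - 1) (ne_of_gt hs')
    rw [show s + β - 1 + 1 = s + β by ring] at h
    field_simp [h]
    exact h.symm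
  have key2 : Real.Gamma s ≤ Real.Gamma (s + β) * (s + β - 1) ^ (-β) := by
    calc Real.Gamma s ≤ Real.Gamma (s + β - 1) ^ β * Real.Gamma (s + β) ^ (1 - β) := key
      _ = Real.Gamma (s + β) * (s + β - 1) ^ (-β) := by
          rw [hrec, Real.div_rpow hA.le hs'.le, div_eq_mul_inv,
            ← Real.rpow_neg hs'.le, mul_assoc, mul_comm ((s + β - 1) ^ (-β)),
            ← mul_assoc, ← Real.rpow_add hA]
          norm_num
  unfold eulerBeta
  rw [add_comm β s, div_le_iff₀ hA]
  calc Real.Gamma β * Real.Gamma s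
      ≤ Real.Gamma β * (Real.Gamma (s + β) * (s + β - 1) ^ (-β)) := by
        exact mul_le_mul_of_nonneg_left key2 hβΓ.le
    _ = Real.Gamma β * (s + β - 1) ^ (-β) * Real.Gamma (s + β) := by ring

theorem beta_bigO_and_series_converges (β b : ℝ) (hβ0 : 0 < β) (hβ1 : β < 1) (hb : 0 < b)
    (c : ℕ → ℝ) (hc0 : c 0 = 1)
    (hcs : ∀ n : ℕ, c (n + 1) = c n * b * eulerBeta β ((n : ℝ) * β + 1)) :
    ((fun n : ℕ => eulerBeta β ((n : ℝ) * β)) =O[Filter.atTop] fun n : ℕ => (n : ℝ) ^ (-β)) ∧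
      ∀ t : ℝ, 0 ≤ t → Summable (fun k : ℕ => c k * t ^ ((k : ℝ) * β)) := by
  constructor
  · -- Big-O part
    apply IsBigO.of_bound (Real.Gamma β * (β / 2) ^ (-β))
    filter_upwards [Filter.eventually_ge_atTop (⌈2 / β⌉₊ + 1)] with n hn
    have hn2 : (2 : ℝ) / β ≤ (n : ℝ) := by
      calc (2:ℝ)/β ≤ (⌈2/β⌉₊ : ℝ) := Nat.le_ceil _
        _ ≤ (n : ℝ) := by exact_mod_cast le_trans (Nat.le_succ _) hn
    have hnβ : (2 : ℝ) ≤ (n : ℝ) * β := by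
      rw [div_le_iff₀ hβ0] at hn2; linarith
    have hnpos : (0 : ℝ) < (n : ℝ) := by
      have : (0:ℝ) < 2/β := by positivity
      linarith
    have hs : (0:ℝ) < (n : ℝ) * β := by linarith
    have hs' : (0:ℝ) < (n : ℝ) * β + β - 1 := by linarith
    have hhalf : (n : ℝ) * β / 2 ≤ (n : ℝ) * β + β - 1 := by linarith
    have hbound := eulerBeta_le β ((n : ℝ) * β) hβ0 hβ1 hs hs'
    have h2 : ((n : ℝ) * β + β - 1) ^ (-β) ≤ ((n : ℝ) * β / 2) ^ (-β) :=
      Real.rpow_le_rpow_of_nonpos (by positivity) hhalf (by linarith)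
    have heq : ((n : ℝ) * β / 2) ^ (-β) = (β / 2) ^ (-β) * (n : ℝ) ^ (-β) := by
      rw [show (n : ℝ) * β / 2 = (n : ℝ) * (β / 2) by ring,
        Real.mul_rpow hnpos.le (by positivity), mul_comm]
    have hBpos : 0 < eulerBeta β ((n : ℝ) * β) := eulerBeta_pos hβ0 hs
    rw [Real.norm_eq_abs, Real.norm_eq_abs, abs_of_pos hBpos,
      abs_of_nonneg (Real.rpow_nonneg hnpos.le _)]
    calc eulerBeta β ((n : ℝ) * β)
        ≤ Real.Gamma β * ((n : ℝ) * β + β - 1) ^ (-β) := hbound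
      _ ≤ Real.Gamma β * ((n : ℝ) * β / 2) ^ (-β) :=
          mul_le_mul_of_nonneg_left h2 (Real.Gamma_pos_of_pos hβ0).le
      _ = Real.Gamma β * (β / 2) ^ (-β) * (n : ℝ) ^ (-β) := by rw [heq]; ring
  · -- Summability part
    intro t ht
    have hΓβ : 0 < Real.Gamma β := Real.Gamma_pos_of_pos hβ0
    -- the ratio tends to 0
    have htend : Filter.Tendsto
        (fun n : ℕ => b * Real.Gamma β * t ^ β * (((n : ℝ) + 1) * β) ^ (-β))
        Filter.atTop (nhds 0) := by
      have h0 : Filter.Tendsto (fun n : ℕ => ((n : ℝ) + 1)) Filter.atTop Filter.atTop :=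
        Filter.tendsto_atTop_add_const_right Filter.atTop 1
          (tendsto_natCast_atTop_atTop (R := ℝ))
      have h1 : Filter.Tendsto (fun n : ℕ => ((n : ℝ) + 1) * β) Filter.atTop Filter.atTop :=
        h0.atTop_mul_const hβ0
      have h2 := (tendsto_rpow_neg_atTop hβ0).comp h1
      have := h2.const_mul (b * Real.Gamma β * t ^ β)
      simpa using this
    have hev : ∀ᶠ n : ℕ in Filter.atTop,
        b * Real.Gamma β * t ^ β * (((n : ℝ) + 1) * β) ^ (-β) < 1 / 2 := by
      have := htend.eventually (eventually_lt_nhds (show (0:ℝ) < 1/2 by norm_num))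
      simpa using this
    apply summable_of_ratio_norm_eventually_le (r := 1/2) (by norm_num)
    filter_upwards [hev] with n hn
    have hs : (0:ℝ) < (n : ℝ) * β + 1 := by positivity
    have hs' : (0:ℝ) < (n : ℝ) * β + 1 + β - 1 := by
      have : (0:ℝ) ≤ (n : ℝ) * β := by positivity
      linarith
    have hBpos : 0 < eulerBeta β ((n : ℝ) * β + 1) := eulerBeta_pos hβ0 hs
    have hBle : eulerBeta β ((n : ℝ) * β + 1) ≤
        Real.Gamma β * (((n : ℝ) + 1) * β) ^ (-β) := by
      have := eulerBeta_le β ((n : ℝ) * β + 1) hβ0 hβ1 hs hs'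
      rwa [show (n : ℝ) * β + 1 + β - 1 = ((n : ℝ) + 1) * β by ring] at this
    -- split t^((n+1)β)
    have hsplit : t ^ (((n : ℝ) + 1) * β) = t ^ ((n : ℝ) * β) * t ^ β := by
      rw [show ((n : ℝ) + 1) * β = (n : ℝ) * β + β by ring]
      exact Real.rpow_add' ht (by positivity)
    set D := eulerBeta β ((n : ℝ) * β + 1) with hD
    have hratio : b * D * t ^ β ≤ 1 / 2 := by
      calc b * D * t ^ β
          ≤ b * (Real.Gamma β * (((n : ℝ) + 1) * β) ^ (-β)) * t ^ β :=
            mul_le_mul_of_nonneg_right (mul_le_mul_of_nonneg_left hBle hb.le)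
              (Real.rpow_nonneg ht _)
        _ = b * Real.Gamma β * t ^ β * (((n : ℝ) + 1) * β) ^ (-β) := by ring
        _ ≤ 1 / 2 := hn.le
    have e1 : c (n + 1) * t ^ (((n : ℕ) + 1 : ℝ) * β)
        = c n * t ^ ((n : ℝ) * β) * (b * D * t ^ β) := by
      rw [hcs n, hsplit]; ring
    have e2 : ((((n : ℕ) + 1 : ℕ)) : ℝ) = ((n : ℕ) + 1 : ℝ) := by push_cast; ring
    rw [Real.norm_eq_abs, Real.norm_eq_abs, e2, e1, abs_mul,
      abs_of_nonneg (show (0:ℝ) ≤ b * D * t ^ β from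
        mul_nonneg (mul_nonneg hb.le hBpos.le) (Real.rpow_nonneg ht _))]
    calc |c n * t ^ ((n : ℝ) * β)| * (b * D * t ^ β)
        ≤ |c n * t ^ ((n : ℝ) * β)| * (1 / 2) :=
          mul_le_mul_of_nonneg_left hratio (abs_nonneg _)
      _ = 1 / 2 * |c n * t ^ ((n : ℝ) * β)| := by ring
end
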